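/- arXiv:2108.11209 — 2 statements merged into one kernel-verified Lean document; each statement's English description precedes it below -/
import Mathlib

section
/- Let α : [0, T] → ℝ be a nonnegative differentiable function, let V : [0, T] → ℝ be continuous, and suppose |α'(s)| ≤ C (|V(s)| + 1) α(s) for all s and some C > 0. If moreover |V(s)| ≤ |V(t)| + M |s - t| for a constant M ≥ 0 and a fixed t ∈ [0, T], then for all s ∈ [0, T], α(t) · exp(-C[(|V(t)| + 1)|s - t| + M (s - t)²]) ≤ α(s) ≤ α(t) · exp(C[(|V(t)| + 1)|s - t| + M (s - t)²]). -/
/-!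
If `|α'| ≤ r α` with `α ≥ 0`, then `α · exp (-∫ r)` is antitone and `α · exp (∫ r)` is
monotone, which bounds `α s / α t` above and below by `exp |∫ₜˢ r|`. Along the trajectory
the rate is at most `r u = C (|V t| + 1 + M |u - t|)`, whose integral between `t` and `s`
is at most `C ((|V t| + 1) |s - t| + M (s - t)²)`.
-/

open Real Set

section Gronwall

variable {f f' φ φ' : ℝ → ℝ} {D : Set ℝ}

theorem antitoneOn_mul_exp_neg_of_deriv_le (hD : Convex ℝ D)
    (hf : ∀ u ∈ D, HasDerivAt f (f' u) u) (hφ : ∀ u ∈ D, HasDerivAt φ (φ' u) u)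
    (hle : ∀ u ∈ D, f' u ≤ φ' u * f u) :
    AntitoneOn (fun u => f u * exp (-φ u)) D := by
  have hderiv : ∀ u ∈ D, HasDerivAt (fun u => f u * exp (-φ u))
      ((f' u - φ' u * f u) * exp (-φ u)) u := fun u hu =>
    ((hf u hu).mul (hφ u hu).fun_neg.exp).congr_deriv (by ring)
  refine antitoneOn_of_hasDerivWithinAt_nonpos hD
    (fun u hu => (hderiv u hu).continuousAt.continuousWithinAt)
    (fun u hu => (hderiv u (interior_subset hu)).hasDerivWithinAt) fun u hu => ?_
  exact mul_nonpos_of_nonpos_of_nonneg (sub_nonpos.2 (hle u (interior_subset hu)))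
    (exp_pos _).le

theorem monotoneOn_mul_exp_of_neg_mul_le_deriv (hD : Convex ℝ D)
    (hf : ∀ u ∈ D, HasDerivAt f (f' u) u) (hφ : ∀ u ∈ D, HasDerivAt φ (φ' u) u)
    (hle : ∀ u ∈ D, -(φ' u * f u) ≤ f' u) :
    MonotoneOn (fun u => f u * exp (φ u)) D := by
  have := antitoneOn_mul_exp_neg_of_deriv_le hD (fun u hu => (hf u hu).neg)
    (fun u hu => (hφ u hu).neg) fun u hu => by simpa [neg_le] using hle u hu
  simpa only [Pi.neg_apply, neg_neg, neg_mul] using this.neg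

theorem le_mul_exp_abs_sub_of_abs_deriv_le (hD : Convex ℝ D) (hf₀ : ∀ u ∈ D, 0 ≤ f u)
    (hf : ∀ u ∈ D, HasDerivAt f (f' u) u) (hφ : ∀ u ∈ D, HasDerivAt φ (φ' u) u)
    (hle : ∀ u ∈ D, |f' u| ≤ φ' u * f u) ⦃x y : ℝ⦄ (hx : x ∈ D) (hy : y ∈ D) :
    f y ≤ f x * exp |φ y - φ x| := by
  have hmono := monotoneOn_mul_exp_of_neg_mul_le_deriv hD hf hφ fun u hu =>
    neg_le_of_abs_le (hle u hu)
  have hanti := antitoneOn_mul_exp_neg_of_deriv_le hD hf hφ fun u hu =>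
    (le_abs_self _).trans (hle u hu)
  rcases le_total x y with hxy | hyx
  · calc f y = f y * exp (-φ y) * exp (φ y) := by rw [mul_assoc, ← exp_add]; simp
      _ ≤ f x * exp (-φ x) * exp (φ y) :=
        mul_le_mul_of_nonneg_right (hanti hx hy hxy) (exp_pos _).le
      _ = f x * exp (φ y - φ x) := by rw [mul_assoc, ← exp_add]; ring_nf
      _ ≤ f x * exp |φ y - φ x| := by gcongr; exacts [hf₀ x hx, le_abs_self _]
  · calc f y = f y * exp (φ y) * exp (-φ y) := by rw [mul_assoc, ← exp_add]; simp
      _ ≤ f x * exp (φ x) * exp (-φ y) :=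
        mul_le_mul_of_nonneg_right (hmono hy hx hyx) (exp_pos _).le
      _ = f x * exp (-(φ y - φ x)) := by rw [mul_assoc, ← exp_add]; ring_nf
      _ ≤ f x * exp |φ y - φ x| := by gcongr; exacts [hf₀ x hx, neg_le_abs _]

theorem le_mul_exp_abs_integral_of_abs_deriv_le {r : ℝ → ℝ} (hD : Convex ℝ D)
    (hf₀ : ∀ u ∈ D, 0 ≤ f u) (hf : ∀ u ∈ D, HasDerivAt f (f' u) u) (hr : Continuous r)
    (hle : ∀ u ∈ D, |f' u| ≤ r u * f u) ⦃x y : ℝ⦄ (hx : x ∈ D) (hy : y ∈ D) :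
    f y ≤ f x * exp |∫ u in x..y, r u| := by
  simpa using le_mul_exp_abs_sub_of_abs_deriv_le hD hf₀ hf
    (fun u _ => (hr.integral_hasStrictDerivAt x u).hasDerivAt) hle hx hy

end Gronwall

theorem abs_integral_add_mul_abs_sub_le {a b : ℝ} (ha : 0 ≤ a) (hb : 0 ≤ b) (t s : ℝ) :
    |∫ u in t..s, (a + b * |u - t|)| ≤ a * |s - t| + b * (s - t) ^ 2 := by
  have hle : ∀ u ∈ uIoc t s, ‖a + b * |u - t|‖ ≤ a + b * |s - t| := fun u hu => by
    rw [Real.norm_eq_abs, abs_of_nonneg (by positivity)]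
    gcongr a + b * ?_
    exact abs_sub_left_of_mem_uIcc (uIoc_subset_uIcc hu)
  calc |∫ u in t..s, (a + b * |u - t|)| ≤ (a + b * |s - t|) * |s - t| := by
        simpa only [Real.norm_eq_abs] using intervalIntegral.norm_integral_le_of_norm_le_const hle
    _ = a * |s - t| + b * (s - t) ^ 2 := by rw [← sq_abs (s - t)]; ring

theorem gronwall_velocity_lemma_general
    (T C M : ℝ) (hC : 0 < C) (hM : 0 ≤ M)
    (α V : ℝ → ℝ)
    (hα_nonneg : ∀ s ∈ Set.Icc (0:ℝ) T, 0 ≤ α s)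
    (hα_diff : ∀ s ∈ Set.Icc (0:ℝ) T, DifferentiableAt ℝ α s)
    (hα_bound : ∀ s ∈ Set.Icc (0:ℝ) T, |deriv α s| ≤ C * (|V s| + 1) * α s)
    (t : ℝ) (ht : t ∈ Set.Icc (0:ℝ) T)
    (hV_growth : ∀ s ∈ Set.Icc (0:ℝ) T, |V s| ≤ |V t| + M * |s - t|) :
    ∀ s ∈ Set.Icc (0:ℝ) T,
      α t * Real.exp (-(C * ((|V t| + 1) * |s - t| + M * (s - t)^2))) ≤ α s ∧
      α s ≤ α t * Real.exp (C * ((|V t| + 1) * |s - t| + M * (s - t)^2)) := by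
  intro s hs
  set E := C * ((|V t| + 1) * |s - t| + M * (s - t) ^ 2)
  set r : ℝ → ℝ := fun u => C * (|V t| + 1) + C * M * |u - t|
  have hrate : ∀ u ∈ Icc 0 T, |deriv α u| ≤ r u * α u := fun u hu => by
    have := mul_le_mul_of_nonneg_left (hV_growth u hu) hC.le
    exact (hα_bound u hu).trans
      (mul_le_mul_of_nonneg_right (by dsimp only [r]; linarith) (hα_nonneg u hu))
  have hE : |∫ u in t..s, r u| ≤ E :=
    (abs_integral_add_mul_abs_sub_le (by positivity) (by positivity) t s).trans_eq (by ring)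
  have hgronwall := le_mul_exp_abs_integral_of_abs_deriv_le (convex_Icc 0 T) hα_nonneg
    (fun u hu => (hα_diff u hu).hasDerivAt) (by fun_prop) hrate
  constructor
  · have h := hgronwall hs ht
    rw [intervalIntegral.integral_symm, abs_neg] at h
    calc α t * exp (-E) ≤ α s * exp E * exp (-E) := by
          gcongr; exact h.trans (by gcongr; exact hα_nonneg s hs)
      _ = α s := by rw [mul_assoc, ← exp_add, add_neg_cancel, exp_zero, mul_one]
  · exact (hgronwall ht hs).trans (by gcongr; exact hα_nonneg t ht)

theorem gronwall_velocity_lemma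
    (T C M : ℝ) (hT : 0 < T) (hC : 0 < C) (hM : 0 ≤ M)
    (α V : ℝ → ℝ)
    (hα_nonneg : ∀ s ∈ Set.Icc (0:ℝ) T, 0 ≤ α s)
    (hα_diff : ∀ s ∈ Set.Icc (0:ℝ) T, DifferentiableAt ℝ α s)
    (hV_cont : ContinuousOn V (Set.Icc 0 T))
    (hα_bound : ∀ s ∈ Set.Icc (0:ℝ) T, |deriv α s| ≤ C * (|V s| + 1) * α s)
    (t : ℝ) (ht : t ∈ Set.Icc (0:ℝ) T)
    (hV_growth : ∀ s ∈ Set.Icc (0:ℝ) T, |V s| ≤ |V t| + M * |s - t|) :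
    ∀ s ∈ Set.Icc (0:ℝ) T,
      α t * Real.exp (-(C * ((|V t| + 1) * |s - t| + M * (s - t)^2))) ≤ α s ∧
      α s ≤ α t * Real.exp (C * ((|V t| + 1) * |s - t| + M * (s - t)^2)) :=
  gronwall_velocity_lemma_general T C M hC hM α V hα_nonneg hα_diff hα_bound t ht hV_growth
end

section
/- Let s₁ < s₀, let X : [s₁, s₀] → ℝ^d and V : [s₁, s₀] → ℝ^d satisfy X' = V and V' = E(s, X(s)) with ‖E‖_∞ ≤ M₀ and ‖V(s)‖ ≤ M for all s. If ξ(X(s₀)) = ξ(X(s₁)) = 0 where ξ is C² with ‖∇²ξ‖_∞ ≤ L, then |V(s₁) · ∇ξ(X(s₁))| ≤ (1/2)(L M² + M₀ ‖∇ξ‖_∞)(s₀ - s₁). -/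
/-!
Along the trajectory, `f(s) = ξ(X s)` has derivative `g(s) = ⟪∇ξ(X s), V s⟫`, and
`g' = ⟪∇ξ(X), E⟫ + ⟪∇²ξ(X) V, V⟫` is bounded by `C = L M² + M₀ G`. Taylor's theorem with this
bound on the second derivative gives `|f(s₀) - f(s₁) - (s₀ - s₁) g(s₁)| ≤ C/2 (s₀ - s₁)²`, and
since `f` vanishes at both ends, `|g(s₁)| ≤ C/2 (s₀ - s₁)`.
-/

open Set

section Taylor

variable {E : Type*} [NormedAddCommGroup E] [NormedSpace ℝ E] {f g g' : ℝ → E} {a b C : ℝ}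

theorem norm_image_sub_sub_smul_deriv_le_of_norm_deriv2_le
    (hf : ∀ x ∈ Icc a b, HasDerivWithinAt f (g x) (Icc a b) x)
    (hg : ∀ x ∈ Icc a b, HasDerivWithinAt g (g' x) (Icc a b) x)
    (bound : ∀ x ∈ Ico a b, ‖g' x‖ ≤ C) :
    ∀ x ∈ Icc a b, ‖f x - f a - (x - a) • g a‖ ≤ C / 2 * (x - a) ^ 2 := by
  have hg_lip := norm_image_sub_le_of_norm_deriv_le_segment' hg bound
  have hrem : ∀ x ∈ Icc a b, HasDerivWithinAt (fun y => f y - f a - (y - a) • g a)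
      (g x - g a) (Icc a b) x := fun x hx =>
    (((hf x hx).sub_const (f a)).sub (((hasDerivWithinAt_id x _).sub_const a).smul_const
      (g a))).congr_deriv (by rw [one_smul])
  refine image_norm_le_of_norm_deriv_right_le_deriv_boundary
    (fun x hx => (hrem x hx).continuousWithinAt)
    (fun x hx => (hrem x (Ico_subset_Icc_self hx)).mono_of_mem_nhdsWithin
      (Icc_mem_nhdsGE_of_mem hx))
    (B' := fun x => C * (x - a)) (by simp) (fun x => ?_)
    (fun x hx => hg_lip x (Ico_subset_Icc_self hx))
  exact ((((hasDerivAt_id x).sub_const a).pow 2).const_mul (C / 2)).congr_deriv (by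
    simp only [Nat.cast_ofNat, id_eq, Nat.add_one_sub_one, pow_one, mul_one]
    ring)

theorem norm_deriv_le_of_image_eq_of_norm_deriv2_le (hab : a < b) (hfab : f a = f b)
    (hf : ∀ x ∈ Icc a b, HasDerivWithinAt f (g x) (Icc a b) x)
    (hg : ∀ x ∈ Icc a b, HasDerivWithinAt g (g' x) (Icc a b) x)
    (bound : ∀ x ∈ Ico a b, ‖g' x‖ ≤ C) :
    ‖g a‖ ≤ C / 2 * (b - a) := by
  have h := norm_image_sub_sub_smul_deriv_le_of_norm_deriv2_le hf hg bound b ⟨hab.le, le_rfl⟩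
  rw [hfab, sub_self, zero_sub, norm_neg, norm_smul, Real.norm_of_nonneg (sub_nonneg.2 hab.le),
    mul_comm, sq, ← mul_assoc] at h
  exact le_of_mul_le_mul_right h (sub_pos.2 hab)

end Taylor

section Gradient

variable {F : Type*} [NormedAddCommGroup F] [InnerProductSpace ℝ F] [CompleteSpace F]
  {ξ : F → ℝ}

theorem ContDiff.differentiable_gradient {n : WithTop ℕ∞} (hξ : ContDiff ℝ n ξ) (hn : 2 ≤ n) :
    Differentiable ℝ (gradient ξ) :=
  (InnerProductSpace.toDual ℝ F).symm.toContinuousLinearEquiv.differentiable.comp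
    ((hξ.fderiv_right hn).differentiable one_ne_zero)

theorem HasGradientAt.comp_hasDerivAt {X : ℝ → F} {u v : F} {t : ℝ}
    (hξ : HasGradientAt ξ u (X t)) (hX : HasDerivAt X v t) :
    HasDerivAt (fun s => ξ (X s)) (inner ℝ u v) t :=
  (hξ.hasFDerivAt.comp_hasDerivAt t hX).congr_deriv (by simp)

end Gradient

section Inner

variable {F : Type*} [NormedAddCommGroup F] [InnerProductSpace ℝ F]

theorem ContinuousLinearMap.abs_inner_apply_self_le {A : F →L[ℝ] F} {v : F} {L M : ℝ}
    (hA : ‖A‖ ≤ L) (hv : ‖v‖ ≤ M) : |inner ℝ (A v) v| ≤ L * M ^ 2 :=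
  calc |inner ℝ (A v) v| ≤ ‖A v‖ * ‖v‖ := abs_real_inner_le_norm _ _
    _ ≤ ‖A‖ * ‖v‖ * ‖v‖ := by gcongr; exact A.le_opNorm v
    _ ≤ L * M ^ 2 := by
      rw [mul_assoc, ← sq]
      gcongr
      exact (norm_nonneg _).trans hA

end Inner

theorem normal_velocity_bound_between_reflections
    (d : ℕ) (s₁ s₀ : ℝ) (hs : s₁ < s₀)
    (X V : ℝ → EuclideanSpace ℝ (Fin d))
    (E : ℝ → EuclideanSpace ℝ (Fin d) → EuclideanSpace ℝ (Fin d))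
    (ξ : EuclideanSpace ℝ (Fin d) → ℝ)
    (M₀ M L G : ℝ)
    (hX : ∀ s ∈ Set.Icc s₁ s₀, HasDerivAt X (V s) s)
    (hV : ∀ s ∈ Set.Icc s₁ s₀, HasDerivAt V (E s (X s)) s)
    (hE : ∀ s x, ‖E s x‖ ≤ M₀)
    (hVbd : ∀ s ∈ Set.Icc s₁ s₀, ‖V s‖ ≤ M)
    (hξ : ContDiff ℝ 2 ξ)
    (hHess : ∀ z, ‖fderiv ℝ (fun w => gradient ξ w) z‖ ≤ L)
    (hGrad : ∀ z, ‖gradient ξ z‖ ≤ G)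
    (hx0 : ξ (X s₀) = 0) (hx1 : ξ (X s₁) = 0) :
    |(inner ℝ (V s₁) (gradient ξ (X s₁)) : ℝ)| ≤
      (1/2) * (L * M^2 + M₀ * G) * (s₀ - s₁) := by
  have hgrad := hξ.differentiable_gradient le_rfl
  have hfirst : ∀ s ∈ Icc s₁ s₀, HasDerivWithinAt (fun t => ξ (X t))
      (inner ℝ (gradient ξ (X s)) (V s)) (Icc s₁ s₀) s := fun s hs =>
    ((hξ.differentiable two_ne_zero _).hasGradientAt.comp_hasDerivAt (hX s hs)).hasDerivWithinAt
  have hsecond : ∀ s ∈ Icc s₁ s₀, HasDerivWithinAt (fun t => inner ℝ (gradient ξ (X t)) (V t))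
      (inner ℝ (gradient ξ (X s)) (E s (X s)) +
        inner ℝ (fderiv ℝ (gradient ξ) (X s) (V s)) (V s)) (Icc s₁ s₀) s := fun s hs =>
    (((hgrad _).hasFDerivAt.comp_hasDerivAt s (hX s hs)).inner ℝ (hV s hs)).hasDerivWithinAt
  have hbound : ∀ s ∈ Ico s₁ s₀, ‖inner ℝ (gradient ξ (X s)) (E s (X s)) +
      inner ℝ (fderiv ℝ (gradient ξ) (X s) (V s)) (V s)‖ ≤ G * M₀ + L * M ^ 2 := fun s hs =>
    calc _ ≤ |inner ℝ (gradient ξ (X s)) (E s (X s))| +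
          |inner ℝ (fderiv ℝ (gradient ξ) (X s) (V s)) (V s)| := abs_add_le _ _
      _ ≤ G * M₀ + L * M ^ 2 := by
        gcongr
        · exact (abs_real_inner_le_norm _ _).trans <| mul_le_mul (hGrad (X s)) (hE s (X s))
            (norm_nonneg _) ((norm_nonneg _).trans (hGrad (X s)))
        · exact (fderiv ℝ (gradient ξ) (X s)).abs_inner_apply_self_le (hHess _)
            (hVbd s (Ico_subset_Icc_self hs))
  have key := norm_deriv_le_of_image_eq_of_norm_deriv2_le hs (hx1.trans hx0.symm) hfirst hsecond
    hbound
  rw [real_inner_comm, ← Real.norm_eq_abs]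
  linarith
end
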